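/- Let ∂ : C₂ → C₁ be a homomorphism of abelian groups, suppose C₂(v) ⊆ C₂ are subgroups for v in a finite set V, and suppose for each v that ∂̄_v(ζ) is a boundary, i.e., ∂̄_v(ζ) = ∂₂(v)(ζ'(v)) for some ζ'(v) ∈ C₂(v). If each H₁ of the vertex complexes vanishes (every cycle in C₁(v) is a boundary), then ζ corresponds to a normal surface if and only if ∂̄_v(ζ) is a cycle for all v, i.e., ∂₁(v)(∂̄_v(ζ)) = 0. -/

import Mathlib

/-! As `d` restricts to `∂₂(v)` on each `C₂(v)`, `d (ζ, ζ')` at `v` is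
`d (ζ, 0) v + ∂₂(v) (ζ' v)`, so `ζ` extends exactly when every `d (ζ, 0) v` is a boundary,
and the preimages can be chosen vertex by vertex.
Boundaries are cycles since `∂₁ ∘ ∂₂ = 0`, and cycles are boundaries since `H₁ = 0`. -/

namespace DFinsupp

variable {ι : Type*} [DecidableEq ι] {β γ : ι → Type*}
  [∀ i, AddCommGroup (β i)] [∀ i, AddCommGroup (γ i)]

-- A choice of preimages need not be finitely supported; choosing them only on `x.support` is.
theorem exists_forall_apply_eq_of_mem_range (f : ∀ i, β i →+ γ i) (x : Π₀ i, γ i)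
    (hx : ∀ i, x i ∈ (f i).range) : ∃ y : Π₀ i, β i, ∀ i, f i (y i) = x i := by
  classical
  choose t ht using hx
  refine ⟨DFinsupp.mk x.support fun i => t i, fun i => ?_⟩
  by_cases hi : i ∈ x.support
  · simp [DFinsupp.mk_apply, hi, ht]
  · simp [DFinsupp.mk_apply, hi, DFinsupp.notMem_support_iff.mp hi]

end DFinsupp

section

variable {V : Type*} [DecidableEq V] {Q : Type*} [AddCommGroup Q] {T C : V → Type*}
  [∀ v, AddCommGroup (T v)] [∀ v, AddCommGroup (C v)]

theorem AddMonoidHom.comp_inr_eq_mapRange (d : Q × (Π₀ v, T v) →+ Π₀ v, C v)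
    (d₂ : ∀ v, T v →+ C v)
    (hrestrict : ∀ (v : V) (t : T v),
      d (0, DFinsupp.single v t) = DFinsupp.single v (d₂ v t)) :
    d.comp (AddMonoidHom.inr Q _) = DFinsupp.mapRange.addMonoidHom d₂ :=
  DFinsupp.addHom_ext fun v t => by simp [hrestrict]

theorem AddMonoidHom.apply_pair_apply (d : Q × (Π₀ v, T v) →+ Π₀ v, C v)
    (d₂ : ∀ v, T v →+ C v)
    (hrestrict : ∀ (v : V) (t : T v),
      d (0, DFinsupp.single v t) = DFinsupp.single v (d₂ v t)) (ζ : Q) (ζ' : Π₀ v, T v)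
    (v : V) : d (ζ, ζ') v = d (ζ, 0) v + d₂ v (ζ' v) := by
  have hsplit : (ζ, ζ') = (ζ, 0) + ((0 : Q), ζ') := by simp
  have hinr := DFunLike.congr_fun (d.comp_inr_eq_mapRange d₂ hrestrict) ζ'
  simp only [AddMonoidHom.comp_apply, AddMonoidHom.inr_apply] at hinr
  rw [hsplit, map_add, DFinsupp.add_apply, hinr, DFinsupp.mapRange.addMonoidHom_apply,
    DFinsupp.mapRange_apply]

end

theorem quad_extends_iff_projections_are_cycles_general
    {V : Type*} [DecidableEq V]
    (Q : Type*) [AddCommGroup Q]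
    (T C₁ C₀ : V → Type*) [∀ v, AddCommGroup (T v)] [∀ v, AddCommGroup (C₁ v)]
    [∀ v, AddCommGroup (C₀ v)]
    (d : Q × (Π₀ v, T v) →+ Π₀ v, C₁ v)
    (d₂ : ∀ v, T v →+ C₁ v) (d₁ : ∀ v, C₁ v →+ C₀ v)
    (hcomplex : ∀ v, (d₁ v).comp (d₂ v) = 0)
    (hrestrict : ∀ (v : V) (t : T v),
      d (0, DFinsupp.single v t) = DFinsupp.single v (d₂ v t))
    (hH₁ : ∀ (v : V) (x : C₁ v), d₁ v x = 0 → x ∈ (d₂ v).range)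
    (ζ : Q) :
    (∃ ζ' : Π₀ v, T v, d (ζ, ζ') = 0) ↔
      ∀ v : V, d₁ v (d (ζ, 0) v) = 0 := by
  have hsolve : ∀ ζ' : Π₀ v, T v, d (ζ, ζ') = 0 ↔ ∀ v, d₂ v (ζ' v) = -d (ζ, 0) v := by
    intro ζ'
    refine (DFunLike.ext_iff (f := d (ζ, ζ')) (g := 0)).trans (forall_congr' fun v => ?_)
    rw [d.apply_pair_apply d₂ hrestrict, DFinsupp.zero_apply, eq_neg_iff_add_eq_zero, add_comm]
  constructor
  · rintro ⟨ζ', hζ'⟩ v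
    have hboundary := DFunLike.congr_fun (hcomplex v) (ζ' v)
    simp only [AddMonoidHom.comp_apply, AddMonoidHom.zero_apply, (hsolve ζ').mp hζ' v,
      map_neg, neg_eq_zero] at hboundary
    exact hboundary
  · intro hcycle
    obtain ⟨ζ', hζ'⟩ := DFinsupp.exists_forall_apply_eq_of_mem_range d₂ (-d (ζ, 0))
      fun v => hH₁ v _ (by simp [hcycle v])
    exact ⟨ζ', (hsolve ζ').mpr hζ'⟩

/-- Corollary for manifolds: with vertex-link chain complexes
`C₂(v) → C₁(v) → C₀(v)` satisfying `∂₁(v) ∘ ∂₂(v) = 0` and `H₁(C_*(v)) = 0`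
(every cycle in `C₁(v)` is a boundary), a quadrilateral chain `ζ` corresponds
to a normal surface (there is `ζ' ∈ ⊕_v C₂(v)` with `∂(ζ + ζ') = 0`) iff
`∂̄_v(ζ)` is a cycle for all `v`, i.e. `∂₁(v)(∂̄_v(ζ)) = 0`. -/
theorem quad_extends_iff_projections_are_cycles
    {V : Type*} [Fintype V] [DecidableEq V]
    (Q : Type*) [AddCommGroup Q]
    (T C₁ C₀ : V → Type*) [∀ v, AddCommGroup (T v)] [∀ v, AddCommGroup (C₁ v)]
    [∀ v, AddCommGroup (C₀ v)]
    (d : Q × (Π₀ v, T v) →+ Π₀ v, C₁ v)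
    (d₂ : ∀ v, T v →+ C₁ v) (d₁ : ∀ v, C₁ v →+ C₀ v)
    (hcomplex : ∀ v, (d₁ v).comp (d₂ v) = 0)
    (hrestrict : ∀ (v : V) (t : T v),
      d (0, DFinsupp.single v t) = DFinsupp.single v (d₂ v t))
    (hH₁ : ∀ (v : V) (x : C₁ v), d₁ v x = 0 → x ∈ (d₂ v).range)
    (ζ : Q) :
    (∃ ζ' : Π₀ v, T v, d (ζ, ζ') = 0) ↔
      ∀ v : V, d₁ v (d (ζ, 0) v) = 0 :=
  quad_extends_iff_projections_are_cycles_general Q T C₁ C₀ d d₂ d₁ hcomplex hrestrict hH₁ ζ
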